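/- (Local optimality theorem.) Suppose every pair in P ∪ N has distinct components, and suppose the embedding B satisfies Δ[w,j] ≤ 0 for every word w ∈ W and every index j (so that with bias b_ℓ = 0 all flip probabilities vanish). Then B is a local minimum of the total loss L over the 1-Hamming-distance neighborhood: every embedding B' that differs from B in exactly one bit of exactly one word's vector satisfies L(B') ≥ L(B). -/
import Mathlib


/-- Flip bit `j` of the binary vector `a`. -/
def flipBit {d : ℕ} (a : Fin d → Fin 2) (j : Fin d) : Fin d → Fin 2 :=
  Function.update a j (1 - a j)

/-- Positive violation count: number of indices `k` with `a k = 0` and `b k = 1`. -/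
def posViol {d : ℕ} (a b : Fin d → Fin 2) : ℕ :=
  (Finset.univ.filter (fun k => a k = 0 ∧ b k = 1)).card

/-- Good-bit count: number of indices `k` with `a k = 0` and `b k = 1`. -/
def goodCount {d : ℕ} (a b : Fin d → Fin 2) : ℕ :=
  (Finset.univ.filter (fun k => a k = 0 ∧ b k = 1)).card

/-- Negative violation indicator: `1` if the good-bit count is `0`, else `0`. -/
def negViol {d : ℕ} (a b : Fin d → Fin 2) : ℕ :=
  if goodCount a b = 0 then 1 else 0

/-- A bit interpreted as a real number. -/
def bitR {d : ℕ} (a : Fin d → Fin 2) (j : Fin d) : ℝ := ((a j : ℕ) : ℝ)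

/-- Total loss of an embedding. -/
noncomputable def totalLoss {W : Type*} {d : ℕ} (α β : ℝ) (P N : Finset (W × W))
    (B : W → Fin d → Fin 2) : ℝ :=
  α * ∑ p ∈ P, (posViol (B p.1) (B p.2) : ℝ) +
  β * ∑ p ∈ N, (negViol (B p.1) (B p.2) : ℝ)

/-- The gradient of the loss at `B` with respect to word `w` and bit `j`. -/
noncomputable def grad {W : Type*} [DecidableEq W] {d : ℕ} (α β : ℝ)
    (P N : Finset (W × W)) (B : W → Fin d → Fin 2) (w : W) (j : Fin d) : ℝ :=
  α * ∑ p ∈ P.filter (fun p => p.1 = w), bitR (B p.2) j * (1 - 2 * bitR (B w) j) +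
  α * ∑ p ∈ P.filter (fun p => p.2 = w), (1 - bitR (B p.1) j) * (2 * bitR (B w) j - 1) +
  β * ∑ p ∈ N.filter (fun p => p.1 = w ∧ goodCount (B w) (B p.2) = 0),
        bitR (B w) j * bitR (B p.2) j +
  β * ∑ p ∈ N.filter (fun p => p.2 = w ∧ goodCount (B p.1) (B w) = 0),
        (1 - bitR (B p.1) j) * (1 - bitR (B w) j) -
  β * ∑ p ∈ N.filter (fun p => p.1 = w ∧ goodCount (B w) (B p.2) = 1),
        bitR (B p.2) j * (1 - bitR (B w) j) -
  β * ∑ p ∈ N.filter (fun p => p.2 = w ∧ goodCount (B p.1) (B w) = 1),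
        bitR (B w) j * (1 - bitR (B p.1) j)

lemma two_cases (x : Fin 2) : x = 0 ∨ x = 1 := by omega

lemma flipBit_ne {d : ℕ} (a : Fin d → Fin 2) (j k : Fin d) (h : k ≠ j) : flipBit a j k = a k :=
  Function.update_of_ne h _ _

lemma flipBit_self {d : ℕ} (a : Fin d → Fin 2) (j : Fin d) : flipBit a j j = 1 - a j :=
  Function.update_self _ _ _

lemma card_split {d : ℕ} (a b : Fin d → Fin 2) (j : Fin d) :
    (posViol a b : ℝ) = (∑ k ∈ Finset.univ.erase j, (if a k = 0 ∧ b k = 1 then (1:ℝ) else 0))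
      + (if a j = 0 ∧ b j = 1 then (1:ℝ) else 0) := by
  rw [posViol, Finset.card_filter]
  push_cast
  rw [Finset.sum_erase_add _ _ (Finset.mem_univ j)]

lemma posViol_flip_fst {d : ℕ} (a b : Fin d → Fin 2) (j : Fin d) :
    (posViol (flipBit a j) b : ℝ) = posViol a b + bitR b j * (2 * bitR a j - 1) := by
  rw [card_split (flipBit a j) b j, card_split a b j]
  have hS : ∑ k ∈ Finset.univ.erase j, (if flipBit a j k = 0 ∧ b k = 1 then (1:ℝ) else 0)
      = ∑ k ∈ Finset.univ.erase j, (if a k = 0 ∧ b k = 1 then (1:ℝ) else 0) :=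
    Finset.sum_congr rfl fun k hk => by rw [flipBit_ne a j k (Finset.ne_of_mem_erase hk)]
  rw [hS, flipBit_self]
  rcases two_cases (a j) with h | h <;> rcases two_cases (b j) with h' | h' <;>
    simp [bitR, h, h'] <;> ring

lemma posViol_flip_snd {d : ℕ} (a b : Fin d → Fin 2) (j : Fin d) :
    (posViol a (flipBit b j) : ℝ) = posViol a b + (1 - bitR a j) * (1 - 2 * bitR b j) := by
  rw [card_split a (flipBit b j) j, card_split a b j]
  have hS : ∑ k ∈ Finset.univ.erase j, (if a k = 0 ∧ flipBit b j k = 1 then (1:ℝ) else 0)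
      = ∑ k ∈ Finset.univ.erase j, (if a k = 0 ∧ b k = 1 then (1:ℝ) else 0) :=
    Finset.sum_congr rfl fun k hk => by rw [flipBit_ne b j k (Finset.ne_of_mem_erase hk)]
  rw [hS, flipBit_self]
  rcases two_cases (a j) with h | h <;> rcases two_cases (b j) with h' | h' <;>
    simp [bitR, h, h'] <;> ring

lemma goodCount_split {d : ℕ} (a b : Fin d → Fin 2) (j : Fin d) :
    goodCount a b = (∑ k ∈ Finset.univ.erase j, (if a k = 0 ∧ b k = 1 then 1 else 0))
      + (if a j = 0 ∧ b j = 1 then 1 else 0) := by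
  rw [goodCount, Finset.card_filter, Finset.sum_erase_add _ _ (Finset.mem_univ j)]

lemma negViol_cast {d : ℕ} (a b : Fin d → Fin 2) :
    (negViol a b : ℝ) = if goodCount a b = 0 then 1 else 0 := by
  rw [negViol]; split <;> simp

lemma negViol_flip_fst {d : ℕ} (a b : Fin d → Fin 2) (j : Fin d) :
    (negViol (flipBit a j) b : ℝ) = negViol a b
      - (if goodCount a b = 0 then bitR a j * bitR b j else 0)
      + (if goodCount a b = 1 then bitR b j * (1 - bitR a j) else 0) := by
  have h1 := goodCount_split (flipBit a j) b j
  have h2 := goodCount_split a b j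
  have hS : ∑ k ∈ Finset.univ.erase j, (if flipBit a j k = 0 ∧ b k = 1 then 1 else 0)
      = ∑ k ∈ Finset.univ.erase j, (if a k = 0 ∧ b k = 1 then 1 else 0) :=
    Finset.sum_congr rfl fun k hk => by rw [flipBit_ne a j k (Finset.ne_of_mem_erase hk)]
  rw [hS, flipBit_self] at h1
  rw [negViol_cast, negViol_cast]
  rcases two_cases (a j) with h | h <;> rcases two_cases (b j) with h' | h' <;>
    simp [bitR, h, h', h1, h2] <;> split_ifs <;> simp_all <;> try ring

lemma negViol_flip_snd {d : ℕ} (a b : Fin d → Fin 2) (j : Fin d) :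
    (negViol a (flipBit b j) : ℝ) = negViol a b
      - (if goodCount a b = 0 then (1 - bitR a j) * (1 - bitR b j) else 0)
      + (if goodCount a b = 1 then bitR b j * (1 - bitR a j) else 0) := by
  have h1 := goodCount_split a (flipBit b j) j
  have h2 := goodCount_split a b j
  have hS : ∑ k ∈ Finset.univ.erase j, (if a k = 0 ∧ flipBit b j k = 1 then 1 else 0)
      = ∑ k ∈ Finset.univ.erase j, (if a k = 0 ∧ b k = 1 then 1 else 0) :=
    Finset.sum_congr rfl fun k hk => by rw [flipBit_ne b j k (Finset.ne_of_mem_erase hk)]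
  rw [hS, flipBit_self] at h1
  rw [negViol_cast, negViol_cast]
  rcases two_cases (a j) with h | h <;> rcases two_cases (b j) with h' | h' <;>
    simp [bitR, h, h', h1, h2] <;> split_ifs <;> simp_all <;> try ring

section PerPair
variable {W : Type*} [DecidableEq W] {d : ℕ}

lemma perpairP (B : W → Fin d → Fin 2) (w : W) (j : Fin d) (p : W × W) (hd : p.1 ≠ p.2) :
    (posViol (Function.update B w (flipBit (B w) j) p.1)
             (Function.update B w (flipBit (B w) j) p.2) : ℝ)
    = (posViol (B p.1) (B p.2) : ℝ)
      - (if p.1 = w then bitR (B p.2) j * (1 - 2 * bitR (B w) j) else 0)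
      - (if p.2 = w then (1 - bitR (B p.1) j) * (2 * bitR (B w) j - 1) else 0) := by
  by_cases h1 : p.1 = w <;> by_cases h2 : p.2 = w
  · exact absurd (h1.trans h2.symm) hd
  · rw [h1, if_pos rfl, if_neg h2, Function.update_self, Function.update_of_ne h2,
      posViol_flip_fst]
    ring
  · rw [h2, if_neg h1, if_pos rfl, Function.update_self, Function.update_of_ne h1,
      posViol_flip_snd]
    ring
  · rw [if_neg h1, if_neg h2, Function.update_of_ne h1, Function.update_of_ne h2]
    ring

lemma perpairN (B : W → Fin d → Fin 2) (w : W) (j : Fin d) (p : W × W) (hd : p.1 ≠ p.2) :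
    (negViol (Function.update B w (flipBit (B w) j) p.1)
             (Function.update B w (flipBit (B w) j) p.2) : ℝ)
    = (negViol (B p.1) (B p.2) : ℝ)
      - (if p.1 = w ∧ goodCount (B w) (B p.2) = 0 then bitR (B w) j * bitR (B p.2) j else 0)
      - (if p.2 = w ∧ goodCount (B p.1) (B w) = 0 then
          (1 - bitR (B p.1) j) * (1 - bitR (B w) j) else 0)
      + (if p.1 = w ∧ goodCount (B w) (B p.2) = 1 then
          bitR (B p.2) j * (1 - bitR (B w) j) else 0)
      + (if p.2 = w ∧ goodCount (B p.1) (B w) = 1 then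
          bitR (B w) j * (1 - bitR (B p.1) j) else 0) := by
  by_cases h1 : p.1 = w <;> by_cases h2 : p.2 = w
  · exact absurd (h1.trans h2.symm) hd
  · rw [h1, Function.update_self, Function.update_of_ne h2, negViol_flip_fst]
    simp only [h1, h2, true_and, false_and, if_false]
    ring
  · rw [h2, Function.update_self, Function.update_of_ne h1, negViol_flip_snd]
    simp only [h1, h2, true_and, false_and, if_false]
    ring
  · rw [Function.update_of_ne h1, Function.update_of_ne h2]
    simp only [h1, h2, false_and, if_false]
    ring

end PerPair

lemma loss_update {W : Type*} [DecidableEq W] {d : ℕ} (α β : ℝ) (P N : Finset (W × W))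
    (hdist : ∀ p ∈ P ∪ N, p.1 ≠ p.2) (B : W → Fin d → Fin 2) (w : W) (j : Fin d) :
    totalLoss α β P N (Function.update B w (flipBit (B w) j))
      = totalLoss α β P N B - grad α β P N B w j := by
  have hP : ∑ p ∈ P, (posViol (Function.update B w (flipBit (B w) j) p.1)
        (Function.update B w (flipBit (B w) j) p.2) : ℝ)
      = ∑ p ∈ P, (posViol (B p.1) (B p.2) : ℝ)
        - ∑ p ∈ P.filter (fun p => p.1 = w), bitR (B p.2) j * (1 - 2 * bitR (B w) j)
        - ∑ p ∈ P.filter (fun p => p.2 = w), (1 - bitR (B p.1) j) * (2 * bitR (B w) j - 1) := by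
    rw [Finset.sum_filter, Finset.sum_filter, ← Finset.sum_sub_distrib,
      ← Finset.sum_sub_distrib]
    exact Finset.sum_congr rfl fun p hp =>
      perpairP B w j p (hdist p (Finset.mem_union_left _ hp))
  have hN : ∑ p ∈ N, (negViol (Function.update B w (flipBit (B w) j) p.1)
        (Function.update B w (flipBit (B w) j) p.2) : ℝ)
      = ∑ p ∈ N, (negViol (B p.1) (B p.2) : ℝ)
        - ∑ p ∈ N.filter (fun p => p.1 = w ∧ goodCount (B w) (B p.2) = 0),
            bitR (B w) j * bitR (B p.2) j
        - ∑ p ∈ N.filter (fun p => p.2 = w ∧ goodCount (B p.1) (B w) = 0),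
            (1 - bitR (B p.1) j) * (1 - bitR (B w) j)
        + ∑ p ∈ N.filter (fun p => p.1 = w ∧ goodCount (B w) (B p.2) = 1),
            bitR (B p.2) j * (1 - bitR (B w) j)
        + ∑ p ∈ N.filter (fun p => p.2 = w ∧ goodCount (B p.1) (B w) = 1),
            bitR (B w) j * (1 - bitR (B p.1) j) := by
    rw [Finset.sum_filter, Finset.sum_filter, Finset.sum_filter, Finset.sum_filter,
      ← Finset.sum_sub_distrib, ← Finset.sum_sub_distrib, ← Finset.sum_add_distrib,
      ← Finset.sum_add_distrib]
    exact Finset.sum_congr rfl fun p hp =>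
      perpairN B w j p (hdist p (Finset.mem_union_right _ hp))
  rw [totalLoss, totalLoss, grad, hP, hN]
  ring

/-- Local optimality: if all gradients are nonpositive, then `B` is a local minimum of the
total loss over the 1-Hamming-distance neighborhood. -/
theorem local_optimality {W : Type*} [DecidableEq W] {d : ℕ} (α β : ℝ)
    (hα : 0 < α) (hβ : 0 < β) (P N : Finset (W × W))
    (hdist : ∀ p ∈ P ∪ N, p.1 ≠ p.2)
    (B : W → Fin d → Fin 2)
    (hgrad : ∀ (w : W) (j : Fin d), grad α β P N B w j ≤ 0) :
    ∀ B' : W → Fin d → Fin 2,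
      (∃ (w : W) (j : Fin d), B' = Function.update B w (flipBit (B w) j)) →
      totalLoss α β P N B ≤ totalLoss α β P N B' := by
  rintro B' ⟨w, j, rfl⟩
  rw [loss_update α β P N hdist B w j]
  linarith [hgrad w j]
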